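/- Let F be a field, L/F a cyclic Galois extension of degree n with Gal(L/F) generated by σ, α an F-basis of L, and 1 ≤ ρ ≤ n. Then dim_F C_ρ^{n,d}(α) ≥ C(n+d−1, d) − n·C(d+ρ−3, d−1), where C(a,b) denotes the binomial coefficient. -/

import Mathlib

open MvPolynomial

/-- The directional-derivative operator `v(∂) = v₁∂₁ + … + v_n∂_n`. -/
noncomputable def dirDeriv {L : Type*} [CommSemiring L] {n : ℕ} (v : Fin n → L) :
    Module.End L (MvPolynomial (Fin n) L) :=
  ∑ i, v i • (pderiv i).toLinearMap

/-- The product (composition) of the operators `w j (∂)` for `j = 1, …, d`. -/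
noncomputable def opProd {L : Type*} [CommSemiring L] {n d : ℕ} (w : Fin d → Fin n → L) :
    Module.End L (MvPolynomial (Fin n) L) :=
  (List.ofFn fun j => dirDeriv (w j)).prod

/-- The code `C_ρ^{n,d}(α,…,α)` as an `F`-subspace of `S_{n,d}(F)`: the intersection of
the homogeneous part of degree `d` with the kernels of all the operators
`f ↦ α(∂) σ^{r₂}(α)(∂) ⋯ σ^{r_d}(α)(∂) ∘ f`, `0 ≤ r₂,…,r_d ≤ ρ - 2`. -/
noncomputable def codeSub (F L : Type*) [Field F] [Field L] [Algebra F L] (n d ρ : ℕ)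
    (σ : L ≃ₐ[F] L) (α : Fin n → L) : Submodule F (MvPolynomial (Fin n) F) :=
  homogeneousSubmodule (Fin n) F d ⊓
    ⨅ r : { r : Fin d → ℕ //
        (∀ j : Fin d, (j : ℕ) = 0 → r j = 0) ∧ ∀ j : Fin d, (j : ℕ) ≠ 0 → r j + 2 ≤ ρ },
      LinearMap.ker
        (((opProd (fun j i => (σ ^ (r.1 j)) (α i))).restrictScalars F).comp
          (MvPolynomial.mapAlgHom (R := F) (Algebra.ofId F L)).toLinearMap)

namespace CodeAux

/- ############ part 1: operators, commutation, homogeneity ############ -/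

section CS
variable {L : Type*} [CommSemiring L] {n : ℕ}

lemma pderiv_mul_comm (i j : Fin n) :
    ((pderiv (R := L) (σ := Fin n) i).toLinearMap * (pderiv j).toLinearMap :
        Module.End L (MvPolynomial (Fin n) L))
      = (pderiv j).toLinearMap * (pderiv i).toLinearMap := by
  apply LinearMap.ext; intro p
  show pderiv i (pderiv j p) = pderiv j (pderiv i p)
  induction p using MvPolynomial.induction_on' with
  | monomial s a =>
    rcases eq_or_ne i j with rfl | hij
    · rfl
    · simp only [pderiv_monomial, Finsupp.tsub_apply,
        Finsupp.single_eq_of_ne hij, Finsupp.single_eq_of_ne (Ne.symm hij), tsub_zero]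
      rw [tsub_right_comm, mul_right_comm]
  | add p q hp hq => simp [hp, hq]

lemma commute_dirDeriv (v w : Fin n → L) : Commute (dirDeriv v) (dirDeriv w) := by
  unfold dirDeriv
  refine Commute.sum_left _ _ _ fun i _ => Commute.sum_right _ _ _ fun j _ => ?_
  have hc : Commute ((pderiv (R := L) (σ := Fin n) i).toLinearMap) ((pderiv j).toLinearMap) :=
    pderiv_mul_comm i j
  exact (hc.smul_left (v i)).smul_right (w j)

lemma degree_add (a b : Fin n →₀ ℕ) : (a + b).degree = a.degree + b.degree := by
  simp [Finsupp.degree_eq_weight_one, map_add]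

lemma card_toMultiset_degree (m : Fin n →₀ ℕ) : Multiset.card m.toMultiset = m.degree := by
  rw [Finsupp.card_toMultiset]; rfl

lemma degree_single (i : Fin n) : (Finsupp.single i 1).degree = 1 := by
  exact Finsupp.degree_single i 1

lemma isHomogeneous_pderiv {k : ℕ} {f : MvPolynomial (Fin n) L} (i : Fin n)
    (hf : f.IsHomogeneous (k + 1)) : (pderiv i f).IsHomogeneous k := by
  conv_lhs => rw [f.as_sum]
  rw [map_sum]
  apply IsHomogeneous.sum
  intro s hs
  rw [pderiv_monomial]
  rcases Nat.eq_zero_or_pos (s i) with h0 | hpos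
  · rw [h0]
    simp only [Nat.cast_zero, mul_zero, map_zero]
    exact isHomogeneous_zero _ _ _
  · apply isHomogeneous_monomial
    have hdeg : s.degree = k + 1 := by
      have := hf (MvPolynomial.mem_support_iff.mp hs)
      rwa [Finsupp.degree_eq_weight_one]
    have hle : Finsupp.single i 1 ≤ s := by rwa [Finsupp.single_le_iff]
    have hsum : (s - Finsupp.single i 1) + Finsupp.single i 1 = s := tsub_add_cancel_of_le hle
    have := congrArg Finsupp.degree hsum
    rw [degree_add, degree_single] at this
    omega

lemma isHomogeneous_dirDeriv {k : ℕ} (v : Fin n → L) {f : MvPolynomial (Fin n) L}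
    (hf : f.IsHomogeneous (k + 1)) : (dirDeriv v f).IsHomogeneous k := by
  unfold dirDeriv
  rw [LinearMap.sum_apply]
  apply IsHomogeneous.sum
  intro i _
  rw [LinearMap.smul_apply, smul_eq_C_mul]
  exact (isHomogeneous_pderiv i hf).C_mul (v i)

lemma isHomogeneous_listProd : ∀ (l : List (Fin n → L)) {k : ℕ} {f : MvPolynomial (Fin n) L},
    f.IsHomogeneous (l.length + k) → (((l.map dirDeriv).prod : Module.End L _) f).IsHomogeneous k
  | [], k, f, hf => by simpa using hf
  | v :: t, k, f, hf => by
    rw [List.map_cons, List.prod_cons, Module.End.mul_apply]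
    refine isHomogeneous_dirDeriv v (isHomogeneous_listProd t ?_)
    have h2 : (v :: t : List _).length + k = t.length + (k + 1) := by
      simp only [List.length_cons]; omega
    rwa [h2] at hf

lemma eq_C_of_isHomogeneous_zero {f : MvPolynomial (Fin n) L} (hf : f.IsHomogeneous 0) :
    f = C (coeff 0 f) := by
  ext m
  rcases eq_or_ne m 0 with rfl | hm
  · simp
  · rw [coeff_C, if_neg (Ne.symm hm)]
    exact hf.coeff_eq_zero (by rwa [Ne, Finsupp.degree_eq_zero_iff])

end CS

/- ############ part 2: rank bounds ############ -/

section Rank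
open Module LinearMap

variable {K V M : Type*} [Field K] [AddCommGroup V] [Module K V]
  [AddCommGroup M] [Module K M]

lemma rank_single (Cs : Submodule K M) [FiniteDimensional K Cs]
    (ψ : V →ₗ[K] M) (W : Submodule K V) [FiniteDimensional K W]
    (h : ∀ v ∈ W, ψ v ∈ Cs) :
    finrank K W ≤ finrank K ↥(W ⊓ LinearMap.ker ψ) + finrank K Cs := by
  set φ := ψ.comp W.subtype with hφ
  have h1 : finrank K ↥(LinearMap.range φ) + finrank K ↥(LinearMap.ker φ) = finrank K W :=
    φ.finrank_range_add_finrank_ker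
  have h2 : LinearMap.range φ ≤ Cs := by
    rintro x ⟨⟨v, hv⟩, rfl⟩
    exact h v hv
  have h3 : finrank K ↥(LinearMap.range φ) ≤ finrank K Cs := Submodule.finrank_mono h2
  have hker : Submodule.map W.subtype (LinearMap.ker φ) = W ⊓ LinearMap.ker ψ := by
    rw [hφ, LinearMap.ker_comp, Submodule.map_comap_subtype]
  have h4 : finrank K ↥(W ⊓ LinearMap.ker ψ) = finrank K ↥(LinearMap.ker φ) := by
    rw [← hker, Submodule.finrank_map_subtype_eq]
  omega

lemma rank_finset {ι : Type*} [DecidableEq ι] (Cs : Submodule K M) [FiniteDimensional K Cs]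
    (ψ : ι → V →ₗ[K] M) (s : Finset ι) :
    ∀ (W : Submodule K V), FiniteDimensional K W →
      (∀ i ∈ s, ∀ v ∈ W, ψ i v ∈ Cs) →
      finrank K W - s.card * finrank K Cs ≤
        finrank K ↥(W ⊓ ⨅ i ∈ s, LinearMap.ker (ψ i)) := by
  induction s using Finset.induction_on with
  | empty =>
    intro W _ _
    have he : (⨅ i ∈ (∅ : Finset ι), LinearMap.ker (ψ i)) = ⊤ := by simp
    rw [he, inf_top_eq]
    simp
  | @insert a s ha ih =>
    intro W hWfin h
    haveI := hWfin
    haveI : FiniteDimensional K ↥(W ⊓ LinearMap.ker (ψ a)) :=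
      Submodule.finiteDimensional_of_le inf_le_left
    have key := ih (W ⊓ LinearMap.ker (ψ a)) inferInstance
      (fun i hi v hv => h i (Finset.mem_insert_of_mem hi) v (Submodule.mem_inf.mp hv).1)
    have single := rank_single Cs (ψ a) W (fun v hv => h a (Finset.mem_insert_self a s) v hv)
    have heq : W ⊓ ⨅ i ∈ insert a s, LinearMap.ker (ψ i)
        = (W ⊓ LinearMap.ker (ψ a)) ⊓ ⨅ i ∈ s, LinearMap.ker (ψ i) := by
      rw [Finset.iInf_insert, inf_assoc]
    rw [heq, Finset.card_insert_of_notMem ha, Nat.succ_mul]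
    omega

lemma rank_fintype {ι : Type*} [Fintype ι] [DecidableEq ι]
    (Cs : Submodule K M) [FiniteDimensional K Cs]
    (ψ : ι → V →ₗ[K] M) (W : Submodule K V) [FiniteDimensional K W]
    (h : ∀ i, ∀ v ∈ W, ψ i v ∈ Cs) :
    finrank K W - Fintype.card ι * finrank K Cs ≤
      finrank K ↥(W ⊓ ⨅ i, LinearMap.ker (ψ i)) := by
  have h2 := rank_finset Cs ψ Finset.univ W inferInstance (fun i _ v hv => h i v hv)
  have h3 : (⨅ i ∈ (Finset.univ : Finset ι), LinearMap.ker (ψ i)) = ⨅ i, LinearMap.ker (ψ i) := by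
    simp
  rw [h3, Finset.card_univ] at h2
  exact h2

end Rank

/- ############ part 3: the operators for the reduced (sorted) index set ############ -/

variable {F L : Type*} [Field F] [Field L] [Algebra F L] {n : ℕ}

noncomputable def opOf (σ : L ≃ₐ[F] L) (α : Fin n → L) (k : ℕ) :
    Module.End L (MvPolynomial (Fin n) L) :=
  dirDeriv (fun i => (σ ^ k) (α i))

noncomputable def psi (σ : L ≃ₐ[F] L) (α : Fin n → L) (ρ e : ℕ) (s : Sym (Fin (ρ - 1)) e) :
    MvPolynomial (Fin n) F →ₗ[F] MvPolynomial (Fin n) L :=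
  ((opOf σ α 0 * ((Multiset.sort (s.1.map Fin.val) (· ≤ ·)).map (opOf σ α)).prod).restrictScalars
      F).comp
    (MvPolynomial.mapAlgHom (R := F) (Algebra.ofId F L)).toLinearMap

end CodeAux

/-- Lower bound on the dimension of the code `C_ρ^{n,d}(α)`:
`dim C_ρ^{n,d}(α) ≥ C(n+d-1, d) - n·C(d+ρ-3, d-1)`. -/
theorem code_dimension_lower_bound
    {F L : Type*} [Field F] [Field L] [Algebra F L]
    [IsGalois F L] [FiniteDimensional F L]
    {n d ρ : ℕ} (hρ1 : 1 ≤ ρ) (hρn : ρ ≤ n)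
    (hn : Module.finrank F L = n)
    (σ : L ≃ₐ[F] L) (hσ : ∀ τ : L ≃ₐ[F] L, ∃ m : ℕ, τ = σ ^ m)
    (α : Fin n → L) (hα : ∃ b : Module.Basis (Fin n) F L, ⇑b = α) :
    Nat.choose (n + d - 1) d - n * Nat.choose (d + ρ - 3) (d - 1) ≤
      Module.finrank F (codeSub F L n d ρ σ α) := by
  classical
  have hn1 : 1 ≤ n := hρ1.trans hρn
  rcases Nat.eq_zero_or_pos d with rfl | hd
  · have h0 : Nat.choose (n + 0 - 1) 0 - n * Nat.choose (0 + ρ - 3) (0 - 1) = 0 := by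
      simp only [Nat.choose_zero_right, Nat.zero_sub, Nat.mul_one]
      omega
    exact le_trans (le_of_eq h0) (Nat.zero_le _)
  obtain ⟨e, rfl⟩ : ∃ e, d = e + 1 := ⟨d - 1, by omega⟩
  set W := homogeneousSubmodule (Fin n) F (e + 1) with hWdef
  -- W is finite dimensional
  haveI hWfin : FiniteDimensional F ↥W := by
    refine Submodule.finiteDimensional_of_le
      (?_ : W ≤ restrictTotalDegree (Fin n) F (e + 1))
    intro f hf
    rw [mem_restrictTotalDegree]
    exact IsHomogeneous.totalDegree_le ((mem_homogeneousSubmodule _ _).mp hf)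
  -- constants submodule
  set CLin : L →ₗ[F] MvPolynomial (Fin n) L :=
    (Algebra.linearMap L (MvPolynomial (Fin n) L)).restrictScalars F with hCLin
  have hCapp : ∀ a : L, CLin a = C a := fun a => by
    simp [hCLin, Algebra.linearMap, algebraMap_eq]
  have hCinj : Function.Injective CLin := fun a b hab => by
    rw [hCapp, hCapp] at hab
    exact C_injective (Fin n) L hab
  set Cs : Submodule F (MvPolynomial (Fin n) L) := LinearMap.range CLin with hCsdef
  have hCs : Module.finrank F ↥Cs = n := by
    rw [hCsdef, LinearMap.finrank_range_of_inj hCinj, hn]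
  -- finrank of W
  have hWrank : Module.finrank F ↥W = (n + (e + 1) - 1).choose (e + 1) := by
    have hWeq : W = restrictSupport F {m : Fin n →₀ ℕ | m.degree = e + 1} :=
      homogeneousSubmodule_eq_finsupp_supported (σ := Fin n) (R := F) (e + 1)
    let E : ↥{m : Fin n →₀ ℕ | m.degree = e + 1} ≃ Sym (Fin n) (e + 1) :=
      { toFun := fun x => ⟨Finsupp.toMultiset x.1, by
          rw [CodeAux.card_toMultiset_degree]; exact x.2⟩
        invFun := fun s => ⟨Multiset.toFinsupp s.1, by
          have h1 : Multiset.card (Finsupp.toMultiset (Multiset.toFinsupp s.1)) = e + 1 := by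
            rw [Multiset.toFinsupp_toMultiset]; exact s.2
          rwa [CodeAux.card_toMultiset_degree] at h1⟩
        left_inv := fun x => Subtype.ext (Finsupp.toMultiset_toFinsupp x.1)
        right_inv := fun s => Subtype.ext (Multiset.toFinsupp_toMultiset s.1) }
    haveI : Fintype ↥{m : Fin n →₀ ℕ | m.degree = e + 1} := Fintype.ofEquiv _ E.symm
    rw [hWeq, Module.finrank_eq_card_basis
      (basisRestrictSupport F {m : Fin n →₀ ℕ | m.degree = e + 1}),
      Fintype.card_congr E, Sym.card_sym_eq_choose, Fintype.card_fin]
  -- membership of images in constants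
  have hψmem : ∀ s : Sym (Fin (ρ - 1)) e, ∀ v ∈ W, CodeAux.psi σ α ρ e s v ∈ Cs := by
    intro s v hv
    set mapLin : MvPolynomial (Fin n) F →ₗ[F] MvPolynomial (Fin n) L :=
      (MvPolynomial.mapAlgHom (R := F) (Algebra.ofId F L)).toLinearMap with hmapLin
    have hw : (mapLin v).IsHomogeneous (e + 1) := by
      have h1 : mapLin v = MvPolynomial.map (algebraMap F L) v := rfl
      rw [h1]
      exact ((mem_homogeneousSubmodule _ _).mp hv).map _
    set lk : List ℕ := Multiset.sort (s.1.map Fin.val) (· ≤ ·) with hlk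
    have hlen : lk.length = e := by
      rw [hlk, Multiset.length_sort, Multiset.card_map, s.2]
    have hop2 : (((0 :: lk).map (fun k i => (σ ^ k) (α i))).map dirDeriv).prod
        = CodeAux.opOf σ α 0 * (lk.map (CodeAux.opOf σ α)).prod := by
      rw [List.map_map]
      rfl
    have happ : CodeAux.psi σ α ρ e s v
        = (((0 :: lk).map (fun k i => (σ ^ k) (α i))).map dirDeriv).prod (mapLin v) := by
      rw [hop2]
      rfl
    have hhom : (CodeAux.psi σ α ρ e s v).IsHomogeneous 0 := by
      rw [happ]
      apply CodeAux.isHomogeneous_listProd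
      rw [List.length_map, List.length_cons, hlen]
      simpa using hw
    rw [CodeAux.eq_C_of_isHomogeneous_zero hhom]
    exact ⟨coeff 0 _, hCapp _⟩
  -- the code contains the multiset-indexed intersection
  have hcode : W ⊓ (⨅ s : Sym (Fin (ρ - 1)) e, LinearMap.ker (CodeAux.psi σ α ρ e s))
      ≤ codeSub F L n (e + 1) ρ σ α := by
    refine le_inf inf_le_left (le_iInf fun r => ?_)
    have hρ2 : ∀ j : Fin e, r.1 j.succ < ρ - 1 := fun j => by
      have := r.2.2 j.succ (by simp [Fin.val_succ])
      omega
    set sr : Sym (Fin (ρ - 1)) e :=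
      ⟨↑(List.ofFn fun j : Fin e => (⟨r.1 j.succ, hρ2 j⟩ : Fin (ρ - 1))), by simp⟩ with hsr
    refine inf_le_right.trans ((iInf_le _ sr).trans (le_of_eq ?_))
    have hr0 : r.1 0 = 0 := r.2.1 0 rfl
    -- the underlying multiset of values
    have h1 : sr.1.map Fin.val = ↑(List.ofFn fun j : Fin e => r.1 j.succ) := by
      rw [show sr.1
          = ↑(List.ofFn fun j : Fin e => (⟨r.1 j.succ, hρ2 j⟩ : Fin (ρ - 1))) from rfl,
        Multiset.map_coe, List.map_ofFn]
      rfl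
    have h2 : List.Perm (Multiset.sort (sr.1.map Fin.val) (· ≤ ·))
        (List.ofFn fun j : Fin e => r.1 j.succ) := by
      rw [← Multiset.coe_eq_coe, Multiset.sort_eq, h1]
    have h3 : List.Perm (List.ofFn fun i : Fin e => CodeAux.opOf σ α (r.1 i.succ))
        ((Multiset.sort (sr.1.map Fin.val) (· ≤ ·)).map (CodeAux.opOf σ α)) := by
      have h4 := (h2.map (CodeAux.opOf σ α)).symm
      rw [List.map_ofFn] at h4
      exact h4
    have hop : opProd (fun j i => (σ ^ (r.1 j)) (α i))
        = CodeAux.opOf σ α 0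
          * ((Multiset.sort (sr.1.map Fin.val) (· ≤ ·)).map (CodeAux.opOf σ α)).prod := by
      have h5 : opProd (fun j i => (σ ^ (r.1 j)) (α i))
          = (List.ofFn fun j : Fin (e + 1) => CodeAux.opOf σ α (r.1 j)).prod := rfl
      rw [h5, ← List.prod_cons]
      refine List.Perm.prod_eq' ?_ ?_
      · rw [List.ofFn_succ, hr0]
        exact List.Perm.cons _ h3
      · exact List.pairwise_ofFn.mpr fun i j _ => CodeAux.commute_dirDeriv _ _
    show LinearMap.ker (CodeAux.psi σ α ρ e sr) = _
    unfold CodeAux.psi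
    rw [hop]
  haveI : FiniteDimensional F ↥(codeSub F L n (e + 1) ρ σ α) :=
    Submodule.finiteDimensional_of_le (inf_le_left :
      codeSub F L n (e + 1) ρ σ α ≤ W)
  have main := CodeAux.rank_fintype Cs (CodeAux.psi σ α ρ e) W hψmem
  have mono := Submodule.finrank_mono hcode
  have hcard : Fintype.card (Sym (Fin (ρ - 1)) e) = (e + 1 + ρ - 3).choose e := by
    rw [Sym.card_sym_eq_choose, Fintype.card_fin]
    congr 1
    omega
  have key := le_trans main mono
  rw [hWrank, hcard, hCs, mul_comm] at key
  simpa only [Nat.add_sub_cancel] using key
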